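/- (Optimality half of the convex-program characterization.) Assume μ{Y = y, A = a, C = c} > 0 for every (y, a, c), and let p_{ac}^y = μ{Y = y, A = a, C = c}, α_a^y = μ{Y = y, A = a}, and s_{ac}^y = p_{ac}^y / μ{A = a, C = c}. For each (a,c) and each θ ∈ ℝ^N_{≥0} let h_θ^{ac} be a chosen derived predictor for (a,c) (one satisfying θ_{h(x,a,c)} · r_{h(x,a,c)}(x) = max_y θ_y · r_y(x) on the support of X given A = a, C = c, where r_y(x) = μ{Y = y, X = x, A = a, C = c} / μ{X = x, A = a, C = c}), and let D_{ac} = ⋂_{θ ∈ ℝ^N_{≥0}} { x ∈ [0,1]^N : Σ_y θ_y s_{ac}^y x_y ≤ Σ_y θ_y s_{ac}^y TP_{ac}^y(h_θ^{ac}) }. Let ε_0, ε_1, …, ε_K ∈ [0,1] and define the feasible set F of all z = (z_{ac})_{a,c} with z_{ac} ∈ D_{ac} for all (a,c), |Σ_c (z_{0c}^y p_{0c}^y / α_0^y − z_{1c}^y p_{1c}^y / α_1^y)| ≤ ε_0 for all y, and |z_{0c}^y − z_{1c}^y| ≤ ε_c for all y, c. Then for every predictor h satisfying ε_0-global equalized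 odds and (ε_c)-local equalized odds, μ{ h(X,A,C) = Y } ≤ sup_{z ∈ F} Σ_{y,a,c} z_{ac}^y · p_{ac}^y. -/
import Mathlib


open scoped Classical
open Finset

/-- Probability of an event under a finite mass function `μ`. -/
noncomputable def pr {Ω : Type*} [Fintype Ω] (μ : Ω → ℝ) (P : Ω → Prop) : ℝ :=
  ∑ ω : Ω, if P ω then μ ω else 0

/-- `μ` is a probability mass function on the finite type `Ω`. -/
structure IsProbMass {Ω : Type*} [Fintype Ω] (μ : Ω → ℝ) : Prop where
  nonneg : ∀ ω, 0 ≤ μ ω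
  total : ∑ ω : Ω, μ ω = 1

/-- True positive rate of the predictor `h` for class `y`, group `a` and client `c`:
`TP_{ac}^y(h) = μ{h(X,A,C) = y ∧ Y = y ∧ A = a ∧ C = c} / μ{Y = y ∧ A = a ∧ C = c}`. -/
noncomputable def TP {Ω 𝒳 : Type*} [Fintype Ω] {K N : ℕ} (μ : Ω → ℝ)
    (X : Ω → 𝒳) (A : Ω → Fin 2) (C : Ω → Fin K) (Y : Ω → Fin N)
    (h : 𝒳 × Fin 2 × Fin K → Fin N) (y : Fin N) (a : Fin 2) (c : Fin K) : ℝ :=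
  pr μ (fun ω => h (X ω, A ω, C ω) = y ∧ Y ω = y ∧ A ω = a ∧ C ω = c) /
    pr μ (fun ω => Y ω = y ∧ A ω = a ∧ C ω = c)

/-- Bayesian optimal score for group `a`, client `c`:
`r_y(x) = μ{Y = y ∧ X = x ∧ A = a ∧ C = c} / μ{X = x ∧ A = a ∧ C = c}`. -/
noncomputable def score {Ω 𝒳 : Type*} [Fintype Ω] {K N : ℕ} (μ : Ω → ℝ)
    (X : Ω → 𝒳) (A : Ω → Fin 2) (C : Ω → Fin K) (Y : Ω → Fin N)
    (a : Fin 2) (c : Fin K) (y : Fin N) (x : 𝒳) : ℝ :=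
  pr μ (fun ω => Y ω = y ∧ X ω = x ∧ A ω = a ∧ C ω = c) /
    pr μ (fun ω => X ω = x ∧ A ω = a ∧ C ω = c)

/-- `h` is a derived predictor for `(a, c)` and weight vector `θ`:
for every `x` in the support, `θ_{h(x,a,c)} ⬝ r_{h(x,a,c)}(x) = max_y θ_y ⬝ r_y(x)`. -/
def IsDerivedPredictor {Ω 𝒳 : Type*} [Fintype Ω] {K N : ℕ} (μ : Ω → ℝ)
    (X : Ω → 𝒳) (A : Ω → Fin 2) (C : Ω → Fin K) (Y : Ω → Fin N)
    (a : Fin 2) (c : Fin K) (θ : Fin N → ℝ) (h : 𝒳 × Fin 2 × Fin K → Fin N) : Prop :=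
  ∀ x : 𝒳, 0 < pr μ (fun ω => X ω = x ∧ A ω = a ∧ C ω = c) →
    IsGreatest (Set.range fun y => θ y * score μ X A C Y a c y x)
      (θ (h (x, a, c)) * score μ X A C Y a c (h (x, a, c)) x)

/-- The region under the ROC hypersurface `D_{ac}`, where `hp θ` is the chosen derived
predictor for weight vector `θ`. -/
def RUS {Ω 𝒳 : Type*} [Fintype Ω] {K N : ℕ} (μ : Ω → ℝ)
    (X : Ω → 𝒳) (A : Ω → Fin 2) (C : Ω → Fin K) (Y : Ω → Fin N)
    (a : Fin 2) (c : Fin K)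
    (hp : (Fin N → ℝ) → 𝒳 × Fin 2 × Fin K → Fin N) : Set (Fin N → ℝ) :=
  ⋂ θ ∈ {θ : Fin N → ℝ | ∀ y, 0 ≤ θ y},
    {v : Fin N → ℝ | (∀ y, v y ∈ Set.Icc (0 : ℝ) 1) ∧
      ∑ y : Fin N, θ y * (pr μ (fun ω => Y ω = y ∧ A ω = a ∧ C ω = c) /
          pr μ (fun ω => A ω = a ∧ C ω = c)) * v y ≤
      ∑ y : Fin N, θ y * (pr μ (fun ω => Y ω = y ∧ A ω = a ∧ C ω = c) /
          pr μ (fun ω => A ω = a ∧ C ω = c)) * TP μ X A C Y (hp θ) y a c}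


section Aux
variable {Ω : Type*} [Fintype Ω] {μ : Ω → ℝ}

lemma pr_nonneg (hμ : ∀ ω, 0 ≤ μ ω) (P : Ω → Prop) : 0 ≤ pr μ P := by
  unfold pr
  exact Finset.sum_nonneg fun ω _ => by by_cases hP : P ω <;> simp [hP, hμ ω]

lemma pr_mono (hμ : ∀ ω, 0 ≤ μ ω) {P Q : Ω → Prop} (hPQ : ∀ ω, P ω → Q ω) :
    pr μ P ≤ pr μ Q := by
  unfold pr
  refine Finset.sum_le_sum fun ω _ => ?_
  by_cases hP : P ω
  · simp [hP, hPQ ω hP]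
  · by_cases hQ : Q ω <;> simp [hP, hQ, hμ ω]

lemma pr_congr {P Q : Ω → Prop} (hPQ : ∀ ω, P ω ↔ Q ω) : pr μ P = pr μ Q := by
  have : P = Q := funext fun ω => propext (hPQ ω)
  rw [this]

lemma pr_partition {β : Type*} [Fintype β] (f : Ω → β) (P : Ω → Prop) :
    pr μ P = ∑ b : β, pr μ (fun ω => P ω ∧ f ω = b) := by
  unfold pr
  rw [Finset.sum_comm]
  refine Finset.sum_congr rfl fun ω _ => ?_
  by_cases hP : P ω <;> simp [hP]

end Aux

/-- optimality half of the convex-program characterization: the accuracy of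
any predictor satisfying `ε₀`-global and `(ε_c)`-local equalized odds is at most the
optimal value of the convex program over the feasible set `F`. -/
theorem accuracy_le_convex_program_value
    {Ω 𝒳 : Type*} [Fintype Ω] [Nonempty Ω] [Fintype 𝒳] {K N : ℕ}
    (hK : 0 < K) (hN : 0 < N)
    (μ : Ω → ℝ) (hμ : IsProbMass μ)
    (X : Ω → 𝒳) (A : Ω → Fin 2) (C : Ω → Fin K) (Y : Ω → Fin N)
    (hpos : ∀ (y : Fin N) (a : Fin 2) (c : Fin K),
      0 < pr μ (fun ω => Y ω = y ∧ A ω = a ∧ C ω = c))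
    (hp : Fin 2 → Fin K → (Fin N → ℝ) → 𝒳 × Fin 2 × Fin K → Fin N)
    (hderiv : ∀ (a : Fin 2) (c : Fin K) (θ : Fin N → ℝ), (∀ y, 0 ≤ θ y) →
      IsDerivedPredictor μ X A C Y a c θ (hp a c θ))
    (ε0 : ℝ) (hε0 : ε0 ∈ Set.Icc (0 : ℝ) 1)
    (εl : Fin K → ℝ) (hεl : ∀ c, εl c ∈ Set.Icc (0 : ℝ) 1)
    (h : 𝒳 × Fin 2 × Fin K → Fin N)
    (hglobal : ∀ y : Fin N,
      |pr μ (fun ω => h (X ω, A ω, C ω) = y ∧ Y ω = y ∧ A ω = 0) /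
          pr μ (fun ω => Y ω = y ∧ A ω = 0) -
        pr μ (fun ω => h (X ω, A ω, C ω) = y ∧ Y ω = y ∧ A ω = 1) /
          pr μ (fun ω => Y ω = y ∧ A ω = 1)| ≤ ε0)
    (hlocal : ∀ (y : Fin N) (c : Fin K),
      |pr μ (fun ω => h (X ω, A ω, C ω) = y ∧ Y ω = y ∧ A ω = 0 ∧ C ω = c) /
          pr μ (fun ω => Y ω = y ∧ A ω = 0 ∧ C ω = c) -
        pr μ (fun ω => h (X ω, A ω, C ω) = y ∧ Y ω = y ∧ A ω = 1 ∧ C ω = c) /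
          pr μ (fun ω => Y ω = y ∧ A ω = 1 ∧ C ω = c)| ≤ εl c) :
    pr μ (fun ω => h (X ω, A ω, C ω) = Y ω) ≤
      sSup ((fun z : Fin 2 → Fin K → Fin N → ℝ =>
          ∑ y : Fin N, ∑ a : Fin 2, ∑ c : Fin K,
            z a c y * pr μ (fun ω => Y ω = y ∧ A ω = a ∧ C ω = c)) ''
        {z : Fin 2 → Fin K → Fin N → ℝ |
          (∀ (a : Fin 2) (c : Fin K), z a c ∈ RUS μ X A C Y a c (hp a c)) ∧
          (∀ y : Fin N,
            |∑ c : Fin K,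
                (z 0 c y * pr μ (fun ω => Y ω = y ∧ A ω = 0 ∧ C ω = c) /
                    pr μ (fun ω => Y ω = y ∧ A ω = 0) -
                  z 1 c y * pr μ (fun ω => Y ω = y ∧ A ω = 1 ∧ C ω = c) /
                    pr μ (fun ω => Y ω = y ∧ A ω = 1))| ≤ ε0) ∧
          (∀ (y : Fin N) (c : Fin K), |z 0 c y - z 1 c y| ≤ εl c)})  := by
  obtain ⟨hμ0, hμ1⟩ := hμ
  -- basic positivity facts
  have hM : ∀ (a : Fin 2) (c : Fin K), 0 < pr μ (fun ω => A ω = a ∧ C ω = c) := fun a c =>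
    lt_of_lt_of_le (hpos ⟨0, hN⟩ a c) (pr_mono hμ0 fun ω hw => ⟨hw.2.1, hw.2.2⟩)
  -- TPs lie in [0,1]
  have hTPmem : ∀ (g : 𝒳 × Fin 2 × Fin K → Fin N) (y : Fin N) (a : Fin 2) (c : Fin K),
      TP μ X A C Y g y a c ∈ Set.Icc (0 : ℝ) 1 := by
    intro g y a c
    have hnum0 : 0 ≤ pr μ (fun ω => g (X ω, A ω, C ω) = y ∧ Y ω = y ∧ A ω = a ∧ C ω = c) :=
      pr_nonneg hμ0 _
    have hle : pr μ (fun ω => g (X ω, A ω, C ω) = y ∧ Y ω = y ∧ A ω = a ∧ C ω = c) ≤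
        pr μ (fun ω => Y ω = y ∧ A ω = a ∧ C ω = c) := pr_mono hμ0 fun ω hw => hw.2
    exact ⟨div_nonneg hnum0 (hpos y a c).le, by rw [TP, div_le_one (hpos y a c)]; exact hle⟩
  -- decomposition of numerators over 𝒳
  have hnum : ∀ (g : 𝒳 × Fin 2 × Fin K → Fin N) (y : Fin N) (a : Fin 2) (c : Fin K),
      pr μ (fun ω => g (X ω, A ω, C ω) = y ∧ Y ω = y ∧ A ω = a ∧ C ω = c) =
      ∑ x : 𝒳, if g (x, a, c) = y then
        pr μ (fun ω => Y ω = y ∧ X ω = x ∧ A ω = a ∧ C ω = c) else 0 := by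
    intro g y a c
    rw [pr_partition X (fun ω => g (X ω, A ω, C ω) = y ∧ Y ω = y ∧ A ω = a ∧ C ω = c)]
    refine Finset.sum_congr rfl fun x _ => ?_
    by_cases hg : g (x, a, c) = y
    · simp only [hg, if_true]
      refine pr_congr fun ω => ?_
      constructor
      · rintro ⟨⟨_, h2, h3, h4⟩, h5⟩; exact ⟨h2, h5, h3, h4⟩
      · rintro ⟨h2, h5, h3, h4⟩; exact ⟨⟨by rw [h5, h3, h4, hg], h2, h3, h4⟩, h5⟩
    · simp only [hg, if_false]
      have hF : ∀ ω, ((g (X ω, A ω, C ω) = y ∧ Y ω = y ∧ A ω = a ∧ C ω = c) ∧ X ω = x)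
          ↔ False := by
        intro ω
        constructor
        · rintro ⟨⟨h1, _, h3, h4⟩, h5⟩; exact hg (by rw [← h5, ← h3, ← h4]; exact h1)
        · exact False.elim
      rw [pr_congr hF]; simp [pr]
  -- weighted true-positive sums as sums over 𝒳
  have hweight : ∀ (g : 𝒳 × Fin 2 × Fin K → Fin N) (θ : Fin N → ℝ) (a : Fin 2) (c : Fin K),
      ∑ y : Fin N, θ y * (pr μ (fun ω => Y ω = y ∧ A ω = a ∧ C ω = c) /
          pr μ (fun ω => A ω = a ∧ C ω = c)) * TP μ X A C Y g y a c =
      (∑ x : 𝒳, θ (g (x, a, c)) *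
          pr μ (fun ω => Y ω = g (x, a, c) ∧ X ω = x ∧ A ω = a ∧ C ω = c)) /
        pr μ (fun ω => A ω = a ∧ C ω = c) := by
    intro g θ a c
    have step1 : ∀ y : Fin N, θ y * (pr μ (fun ω => Y ω = y ∧ A ω = a ∧ C ω = c) /
        pr μ (fun ω => A ω = a ∧ C ω = c)) * TP μ X A C Y g y a c =
        θ y * pr μ (fun ω => g (X ω, A ω, C ω) = y ∧ Y ω = y ∧ A ω = a ∧ C ω = c) /
          pr μ (fun ω => A ω = a ∧ C ω = c) := by
      intro y
      have hp' : pr μ (fun ω => Y ω = y ∧ A ω = a ∧ C ω = c) ≠ 0 := (hpos y a c).ne'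
      have key : ∀ (p M n t : ℝ), p ≠ 0 → t * (p / M) * (n / p) = t * n / M := by
        intro p M n t hp
        rcases eq_or_ne M 0 with hM | hM
        · simp [hM]
        · field_simp
      rw [TP]
      exact key _ _ _ _ hp' 
    rw [Finset.sum_congr rfl fun y _ => step1 y, ← Finset.sum_div]
    congr 1
    have step2 : ∀ y : Fin N,
        θ y * pr μ (fun ω => g (X ω, A ω, C ω) = y ∧ Y ω = y ∧ A ω = a ∧ C ω = c) =
        ∑ x : 𝒳, if g (x, a, c) = y then
          θ y * pr μ (fun ω => Y ω = y ∧ X ω = x ∧ A ω = a ∧ C ω = c) else 0 := by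
      intro y
      rw [hnum g y a c, Finset.mul_sum]
      exact Finset.sum_congr rfl fun x _ => by by_cases hg : g (x, a, c) = y <;> simp [hg]
    rw [Finset.sum_congr rfl fun y _ => step2 y, Finset.sum_comm]
    refine Finset.sum_congr rfl fun x _ => ?_
    rw [Finset.sum_ite_eq]
    simp
  -- the pointwise optimality of derived predictors
  have hRUSineq : ∀ (a : Fin 2) (c : Fin K) (θ : Fin N → ℝ), (∀ y, 0 ≤ θ y) →
      ∑ y : Fin N, θ y * (pr μ (fun ω => Y ω = y ∧ A ω = a ∧ C ω = c) /
          pr μ (fun ω => A ω = a ∧ C ω = c)) * TP μ X A C Y h y a c ≤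
      ∑ y : Fin N, θ y * (pr μ (fun ω => Y ω = y ∧ A ω = a ∧ C ω = c) /
          pr μ (fun ω => A ω = a ∧ C ω = c)) * TP μ X A C Y (hp a c θ) y a c := by
    intro a c θ hθ
    rw [hweight h θ a c, hweight (hp a c θ) θ a c]
    refine div_le_div_of_nonneg_right ?_ (hM a c).le
    refine Finset.sum_le_sum fun x _ => ?_
    by_cases hm : 0 < pr μ (fun ω => X ω = x ∧ A ω = a ∧ C ω = c)
    · have hq : ∀ y : Fin N, pr μ (fun ω => Y ω = y ∧ X ω = x ∧ A ω = a ∧ C ω = c) =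
          score μ X A C Y a c y x * pr μ (fun ω => X ω = x ∧ A ω = a ∧ C ω = c) := by
        intro y
        rw [score, div_mul_cancel₀ _ hm.ne']
      rw [hq, hq, ← mul_assoc, ← mul_assoc]
      exact mul_le_mul_of_nonneg_right
        ((hderiv a c θ hθ x hm).2 ⟨h (x, a, c), rfl⟩) (pr_nonneg hμ0 _)
    · have hm0 : pr μ (fun ω => X ω = x ∧ A ω = a ∧ C ω = c) = 0 :=
        le_antisymm (not_lt.1 hm) (pr_nonneg hμ0 _)
      have hq0 : ∀ y : Fin N, pr μ (fun ω => Y ω = y ∧ X ω = x ∧ A ω = a ∧ C ω = c) = 0 :=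
        fun y => le_antisymm (hm0 ▸ pr_mono hμ0 fun ω hw => hw.2) (pr_nonneg hμ0 _)
      rw [hq0, hq0]
      simp
  -- products TP * p are the numerators
  have hTPp : ∀ (g : 𝒳 × Fin 2 × Fin K → Fin N) (y : Fin N) (a : Fin 2) (c : Fin K),
      TP μ X A C Y g y a c * pr μ (fun ω => Y ω = y ∧ A ω = a ∧ C ω = c) =
      pr μ (fun ω => g (X ω, A ω, C ω) = y ∧ Y ω = y ∧ A ω = a ∧ C ω = c) := fun g y a c =>
    div_mul_cancel₀ _ (hpos y a c).ne'
  -- summing the numerators over clients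
  have hsumC : ∀ (y : Fin N) (a : Fin 2),
      ∑ c : Fin K, pr μ (fun ω => h (X ω, A ω, C ω) = y ∧ Y ω = y ∧ A ω = a ∧ C ω = c) =
      pr μ (fun ω => h (X ω, A ω, C ω) = y ∧ Y ω = y ∧ A ω = a) := by
    intro y a
    rw [pr_partition C (fun ω => h (X ω, A ω, C ω) = y ∧ Y ω = y ∧ A ω = a)]
    exact Finset.sum_congr rfl fun c _ => pr_congr fun ω => by tauto
  -- accuracy decomposition
  have hacc : pr μ (fun ω => h (X ω, A ω, C ω) = Y ω) =
      ∑ y : Fin N, ∑ a : Fin 2, ∑ c : Fin K,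
        TP μ X A C Y h y a c * pr μ (fun ω => Y ω = y ∧ A ω = a ∧ C ω = c) := by
    rw [pr_partition (fun ω => (Y ω, A ω, C ω)) (fun ω => h (X ω, A ω, C ω) = Y ω),
      Fintype.sum_prod_type]
    refine Finset.sum_congr rfl fun y _ => ?_
    rw [Fintype.sum_prod_type]
    refine Finset.sum_congr rfl fun a _ => Finset.sum_congr rfl fun c _ => ?_
    rw [hTPp h y a c]
    refine pr_congr fun ω => ?_
    simp only [Prod.mk.injEq]
    constructor
    · rintro ⟨h1, hy, ha, hc⟩; exact ⟨by rw [← hy]; exact h1, hy, ha, hc⟩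
    · rintro ⟨h1, hy, ha, hc⟩; exact ⟨by rw [hy]; exact h1, hy, ha, hc⟩
  -- the feasible point
  have hfeas : (fun a c y => TP μ X A C Y h y a c) ∈
      {z : Fin 2 → Fin K → Fin N → ℝ |
        (∀ (a : Fin 2) (c : Fin K), z a c ∈ RUS μ X A C Y a c (hp a c)) ∧
        (∀ y : Fin N,
          |∑ c : Fin K,
              (z 0 c y * pr μ (fun ω => Y ω = y ∧ A ω = 0 ∧ C ω = c) /
                  pr μ (fun ω => Y ω = y ∧ A ω = 0) -
                z 1 c y * pr μ (fun ω => Y ω = y ∧ A ω = 1 ∧ C ω = c) /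
                  pr μ (fun ω => Y ω = y ∧ A ω = 1))| ≤ ε0) ∧
        (∀ (y : Fin N) (c : Fin K), |z 0 c y - z 1 c y| ≤ εl c)} := by
    refine ⟨?_, ?_, ?_⟩
    · intro a c
      simp only [RUS]
      exact Set.mem_iInter₂.2 fun θ hθ => ⟨fun y => hTPmem h y a c, hRUSineq a c θ hθ⟩
    · intro y
      have key : ∑ c : Fin K,
          (TP μ X A C Y h y 0 c * pr μ (fun ω => Y ω = y ∧ A ω = 0 ∧ C ω = c) /
              pr μ (fun ω => Y ω = y ∧ A ω = 0) -
            TP μ X A C Y h y 1 c * pr μ (fun ω => Y ω = y ∧ A ω = 1 ∧ C ω = c) /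
              pr μ (fun ω => Y ω = y ∧ A ω = 1)) =
          pr μ (fun ω => h (X ω, A ω, C ω) = y ∧ Y ω = y ∧ A ω = 0) /
            pr μ (fun ω => Y ω = y ∧ A ω = 0) -
          pr μ (fun ω => h (X ω, A ω, C ω) = y ∧ Y ω = y ∧ A ω = 1) /
            pr μ (fun ω => Y ω = y ∧ A ω = 1) := by
        rw [Finset.sum_sub_distrib, ← Finset.sum_div, ← Finset.sum_div,
          Finset.sum_congr rfl fun c _ => hTPp h y 0 c,
          Finset.sum_congr rfl fun c _ => hTPp h y 1 c, hsumC y 0, hsumC y 1]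
      simpa only [key] using hglobal y
    · intro y c
      simp only [TP]
      exact hlocal y c
  rw [hacc]
  refine le_csSup ⟨∑ y : Fin N, ∑ a : Fin 2, ∑ c : Fin K,
      pr μ (fun ω => Y ω = y ∧ A ω = a ∧ C ω = c), ?_⟩
    ⟨fun a c y => TP μ X A C Y h y a c, hfeas, rfl⟩
  rintro r ⟨w, hw, rfl⟩
  refine Finset.sum_le_sum fun y _ => Finset.sum_le_sum fun a _ =>
    Finset.sum_le_sum fun c _ => ?_
  have hmem := hw.1 a c
  simp only [RUS] at hmem
  have h01 := (Set.mem_iInter₂.1 hmem 0 fun y => le_refl 0).1 y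
  calc w a c y * pr μ (fun ω => Y ω = y ∧ A ω = a ∧ C ω = c)
      ≤ 1 * pr μ (fun ω => Y ω = y ∧ A ω = a ∧ C ω = c) :=
        mul_le_mul_of_nonneg_right h01.2 (pr_nonneg hμ0 _)
    _ = pr μ (fun ω => Y ω = y ∧ A ω = a ∧ C ω = c) := one_mul _
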